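/- arXiv:1601.05292 — 2 statements merged into one kernel-verified Lean document; each statement's English description precedes it below -/
import Mathlib

section
/- For every m ≥ 3, maxdeg (V m) > m; consequently V m ≠ U^m, where U := -z - z⁻¹. (Hence for every m ≥ 3, at least one of the links W_n(B_m) and W_{n-2}(B_m) is not link isotopic to the m-component unlink, which proves parts (1)–(3) of the Main Theorem.) -/
/-!
The top degree of `V m` is `5m - 6`. Indeed `V 3 = Q₃` has top degree `9`, and in the recursion
the term `V m · (z^5 - z^3 - z⁻³ + z⁻⁵)` raises the top degree by exactly `5` (ℤ is a domain),
while the correction `U^(m+1) · (z^4 - ⋯ + z⁻⁴)` has top degree at most `m + 5 < 5m - 1`.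
Since `U^m` has top degree at most `m < 5m - 6`, `V m ≠ U^m`.
-/

open LaurentPolynomial

noncomputable def U : LaurentPolynomial ℤ := -T 1 - T (-1)

noncomputable def Q3 : LaurentPolynomial ℤ :=
  T 9 - 2 * T 7 + T 5 - 2 * T 3 - 2 * T 1 - 2 * T (-1) - 2 * T (-3) + T (-5)
    - 2 * T (-7) + T (-9)

/-- The maximum exponent in the support of a Laurent polynomial. -/
noncomputable def maxdeg (p : LaurentPolynomial ℤ) : WithBot ℤ := p.coeff.support.max

/-- The minimum exponent in the support of a Laurent polynomial. -/
noncomputable def mindeg (p : LaurentPolynomial ℤ) : WithTop ℤ := p.coeff.support.min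

namespace LaurentPolynomial

variable {R : Type*} [Semiring R] {p q : R[T;T⁻¹]} {n : ℤ}

theorem degree_eq_supDegree (p : R[T;T⁻¹]) : p.degree = p.supDegree (↑) := by
  rw [degree, AddMonoidAlgebra.supDegree, Finset.max_eq_sup_withBot]

theorem le_degree_of_coeff_ne_zero (h : p.coeff n ≠ 0) : (n : WithBot ℤ) ≤ p.degree :=
  Finset.le_max (Finsupp.mem_support_iff.2 h)

theorem coeff_ne_zero_of_degree_eq (h : p.degree = n) : p.coeff n ≠ 0 :=
  Finsupp.mem_support_iff.1 (Finset.mem_of_max h)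

theorem degree_le_iff_coeff_eq_zero : p.degree ≤ n ↔ ∀ m, n < m → p.coeff m = 0 := by
  refine ⟨fun h m hm => ?_, fun h => Finset.max_le fun m hm => ?_⟩
  · by_contra hne
    exact hm.not_ge (WithBot.coe_le_coe.1 ((le_degree_of_coeff_ne_zero hne).trans h))
  · exact WithBot.coe_le_coe.2 (not_lt.1 fun hlt => Finsupp.mem_support_iff.1 hm (h m hlt))

theorem degree_eq_of_coeff_ne_zero (hn : p.coeff n ≠ 0) (h : ∀ m, n < m → p.coeff m = 0) :
    p.degree = n :=
  le_antisymm (degree_le_iff_coeff_eq_zero.2 h) (le_degree_of_coeff_ne_zero hn)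

theorem degree_add_eq_left_of_degree_lt (h : q.degree < p.degree) :
    (p + q).degree = p.degree := by
  simp only [degree_eq_supDegree] at h ⊢
  exact AddMonoidAlgebra.supDegree_add_eq_left h

theorem degree_mul_le : (p * q).degree ≤ p.degree + q.degree := by
  simp only [degree_eq_supDegree]
  exact AddMonoidAlgebra.supDegree_mul_le WithBot.coe_add

theorem degree_pow_le (k : ℕ) : (p ^ k).degree ≤ k • p.degree := by
  induction k with
  | zero => simpa [← T_zero] using degree_T_le (R := R) 0
  | succ k ih =>
    rw [pow_succ, succ_nsmul]
    exact degree_mul_le.trans (by gcongr)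

theorem degree_mul [NoZeroDivisors R] : (p * q).degree = p.degree + q.degree := by
  obtain rfl | hp := eq_or_ne p 0
  · simp
  obtain rfl | hq := eq_or_ne q 0
  · simp
  obtain ⟨a, ha⟩ := WithBot.ne_bot_iff_exists.1 (mt degree_eq_bot_iff.1 hp)
  obtain ⟨b, hb⟩ := WithBot.ne_bot_iff_exists.1 (mt degree_eq_bot_iff.1 hq)
  rw [← ha, ← hb]
  refine le_antisymm (ha ▸ hb ▸ degree_mul_le) (le_degree_of_coeff_ne_zero ?_)
  have hunique : UniqueAdd p.coeff.support q.coeff.support a b := fun x y hx hy hxy => by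
    have hxa : x ≤ a := by
      exact_mod_cast (le_degree_of_coeff_ne_zero (Finsupp.mem_support_iff.1 hx)).trans ha.ge
    have hyb : y ≤ b := by
      exact_mod_cast (le_degree_of_coeff_ne_zero (Finsupp.mem_support_iff.1 hy)).trans hb.ge
    omega
  rw [AddMonoidAlgebra.coeff_mul_add_of_uniqueAdd hunique]
  exact mul_ne_zero (coeff_ne_zero_of_degree_eq ha.symm) (coeff_ne_zero_of_degree_eq hb.symm)

end LaurentPolynomial

theorem maxdeg_eq_degree (p : LaurentPolynomial ℤ) : maxdeg p = p.degree := rfl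

theorem degree_U_pow_le (k : ℕ) : (U ^ k).degree ≤ k := by
  have hU : U.degree ≤ (1 : ℤ) :=
    degree_le_iff_coeff_eq_zero.2 fun m hm => by simp (disch := omega) [U, if_neg]
  simpa using (degree_pow_le k).trans (nsmul_le_nsmul_right hU k)

theorem degree_Q3 : Q3.degree = (9 : ℤ) :=
  degree_eq_of_coeff_ne_zero (by simp [Q3, two_mul])
    fun m hm => by simp (disch := omega) [Q3, two_mul, if_neg]

theorem degree_V_succ {p : LaurentPolynomial ℤ} {m : ℕ} (hm : 2 ≤ m)
    (hp : p.degree = (5 * m - 6 : ℤ)) :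
    (p * (T 5 - T 3 - T (-3) + T (-5)) +
        U ^ (m + 1) * (T 4 - 2 * T 2 + 3 - 2 * T (-2) + T (-4))).degree =
      ((5 * (m + 1 : ℕ) - 6 : ℤ) : WithBot ℤ) := by
  have hfactor : (T 5 - T 3 - T (-3) + T (-5) : LaurentPolynomial ℤ).degree = (5 : ℤ) :=
    degree_eq_of_coeff_ne_zero (by simp) fun k hk => by simp (disch := omega) [if_neg]
  have hsummand : (T 4 - 2 * T 2 + 3 - 2 * T (-2) + T (-4) : LaurentPolynomial ℤ).degree
      ≤ (4 : ℤ) :=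
    degree_le_iff_coeff_eq_zero.2 fun k hk => by simp (disch := omega) [two_mul, if_neg]
  have hleading : (p * (T 5 - T 3 - T (-3) + T (-5))).degree =
      ((5 * (m + 1 : ℕ) - 6 : ℤ) : WithBot ℤ) := by
    rw [degree_mul, hp, hfactor, ← WithBot.coe_add]
    congr 1
    push_cast
    ring
  have hcorrection : (U ^ (m + 1) * (T 4 - 2 * T 2 + 3 - 2 * T (-2) + T (-4))).degree
      ≤ (((m + 1 : ℕ) + 4 : ℤ) : WithBot ℤ) :=
    degree_mul_le.trans (add_le_add (degree_U_pow_le _) hsummand)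
  have hgap : (((m + 1 : ℕ) + 4 : ℤ) : WithBot ℤ) < ((5 * (m + 1 : ℕ) - 6 : ℤ) : WithBot ℤ) :=
    WithBot.coe_lt_coe.2 (by omega)
  rw [degree_add_eq_left_of_degree_lt (hcorrection.trans_lt (hgap.trans_eq hleading.symm)),
    hleading]

/-- For every `m ≥ 3`, `maxdeg (V m) > m`, hence `V m` differs from the Jones
polynomial of the `m`-component unlink. -/
theorem V_ne_unlink (V : ℕ → LaurentPolynomial ℤ) (hV3 : V 3 = Q3)
    (hVrec : ∀ m : ℕ, 3 ≤ m → V (m + 1) =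
      V m * (T 5 - T 3 - T (-3) + T (-5)) +
        U ^ (m + 1) * (T 4 - 2 * T 2 + 3 - 2 * T (-2) + T (-4))) :
    ∀ m : ℕ, 3 ≤ m → (((m : ℤ) : WithBot ℤ) < maxdeg (V m)) ∧ V m ≠ U ^ m := by
  have degree_V : ∀ m : ℕ, 3 ≤ m → (V m).degree = (5 * m - 6 : ℤ) := by
    intro m hm
    induction m, hm using Nat.le_induction with
    | base => rw [hV3, degree_Q3]; rfl
    | succ m hm ih => rw [hVrec m hm]; exact degree_V_succ (by omega) ih
  intro m hm
  have hlt : ((m : ℤ) : WithBot ℤ) < (V m).degree :=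
    degree_V m hm ▸ WithBot.coe_lt_coe.2 (by omega)
  rw [maxdeg_eq_degree]
  exact ⟨hlt, fun hunlink => (hlt.trans_le (hunlink ▸ degree_U_pow_le m)).false⟩
end

section
/- Let p ∈ R = LaurentPolynomial ℤ be nonzero. If mindeg p < -8 then Φ p is nonzero and mindeg (Φ p) = mindeg p - 4; and if mindeg p > -8 then Φ p is nonzero and mindeg (Φ p) = -12. (This is the paper's lowest-degree analysis of the skein operator: deg_L(Φ(p)) = min{deg_L(p) - 2, -6} in the variable t.) -/
open LaurentPolynomial

/-- The skein operator encoding the relation between Jones polynomials of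
successive Whitehead doubles of `B₃`. -/
noncomputable def Phi (p : LaurentPolynomial ℤ) : LaurentPolynomial ℤ :=
  T (-4) * p + (T (-3) - T (-1)) * Q3

/-! `Φ p` is the sum of `T (-4) * p`, whose lowest exponent is `mindeg p - 4`, and the fixed
correction `(T (-3) - T (-1)) * Q3`, whose lowest term is `T (-12)` (from `T (-3) * T (-9)`).
Away from the threshold `mindeg p = -8` these two lowest exponents differ, so the smaller one
survives in the sum. -/

theorem LaurentPolynomial.coeff_T_mul {R : Type*} [Semiring R] (k n : ℤ) (p : R[T;T⁻¹]) :
    (T k * p).coeff n = p.coeff (n - k) := by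
  rw [T, AddMonoidAlgebra.coeff_single_mul_apply, one_mul, neg_add_eq_sub]

theorem coeff_eq_zero_of_coe_lt_mindeg {p : LaurentPolynomial ℤ} {m : ℤ}
    (h : (m : WithTop ℤ) < mindeg p) : p.coeff m = 0 :=
  Finsupp.notMem_support_iff.mp (Finset.notMem_of_coe_lt_min h)

theorem mindeg_eq_top_iff {p : LaurentPolynomial ℤ} : mindeg p = ⊤ ↔ p = 0 := by
  rw [mindeg, Finset.min_eq_top, Finsupp.support_eq_empty, AddMonoidAlgebra.coeff_eq_zero]

theorem mindeg_eq_coe_iff {p : LaurentPolynomial ℤ} {n : ℤ} :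
    mindeg p = n ↔ p.coeff n ≠ 0 ∧ ∀ m < n, p.coeff m = 0 := by
  constructor
  · intro h
    exact ⟨Finsupp.mem_support_iff.mp (Finset.mem_of_min h), fun m hm =>
      coeff_eq_zero_of_coe_lt_mindeg (h ▸ WithTop.coe_lt_coe.mpr hm)⟩
  · rintro ⟨hn, hlow⟩
    refine le_antisymm (Finset.min_le (Finsupp.mem_support_iff.mpr hn)) (Finset.le_min ?_)
    intro m hm
    by_contra! hlt
    exact Finsupp.mem_support_iff.mp hm (hlow m (WithTop.coe_lt_coe.mp hlt))

theorem mindeg_neg (p : LaurentPolynomial ℤ) : mindeg (-p) = mindeg p := by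
  rw [mindeg, mindeg, AddMonoidAlgebra.coeff_neg, Finsupp.support_neg]

theorem mindeg_T_mul (k : ℤ) (p : LaurentPolynomial ℤ) :
    mindeg (T k * p) = mindeg p + k := by
  obtain rfl | hp := eq_or_ne p 0
  · rw [mul_zero, mindeg_eq_top_iff.mpr rfl, WithTop.top_add]
  obtain ⟨n, hn⟩ := WithTop.ne_top_iff_exists.mp (mt mindeg_eq_top_iff.mp hp)
  obtain ⟨hcoeff, hlow⟩ := mindeg_eq_coe_iff.mp hn.symm
  rw [← hn, ← WithTop.coe_add, mindeg_eq_coe_iff, coeff_T_mul, add_sub_cancel_right]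
  exact ⟨hcoeff, fun m hm => by rw [coeff_T_mul]; exact hlow _ (by omega)⟩

theorem mindeg_add_of_lt {p q : LaurentPolynomial ℤ} (h : mindeg p < mindeg q) :
    mindeg (p + q) = mindeg p := by
  obtain ⟨n, hn⟩ := WithTop.ne_top_iff_exists.mp h.ne_top
  obtain ⟨hcoeff, hlow⟩ := mindeg_eq_coe_iff.mp hn.symm
  have hq : ∀ m ≤ n, q.coeff m = 0 := fun m hm =>
    coeff_eq_zero_of_coe_lt_mindeg ((WithTop.coe_le_coe.mpr hm).trans_lt (hn ▸ h))
  rw [← hn, mindeg_eq_coe_iff]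
  simp only [AddMonoidAlgebra.coeff_add, Finsupp.add_apply, hq n le_rfl, add_zero]
  exact ⟨hcoeff, fun m hm => by rw [hlow m hm, hq m hm.le, add_zero]⟩

theorem mindeg_sub_of_lt {p q : LaurentPolynomial ℤ} (h : mindeg p < mindeg q) :
    mindeg (p - q) = mindeg p := by
  rw [sub_eq_add_neg, mindeg_add_of_lt (by rwa [mindeg_neg])]

theorem mindeg_Q3 : mindeg Q3 = (-9 : ℤ) := by
  refine mindeg_eq_coe_iff.mpr ⟨by simp [Q3, two_mul], fun m hm => ?_⟩
  simp [Q3, two_mul]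
  omega

theorem mindeg_T_sub_T_mul_Q3 : mindeg ((T (-3) - T (-1)) * Q3) = (-12 : ℤ) := by
  rw [sub_mul, mindeg_sub_of_lt] <;> simp only [mindeg_T_mul, mindeg_Q3, ← WithTop.coe_add]
  · norm_num
  · exact WithTop.coe_lt_coe.mpr (by norm_num)

theorem mindeg_Phi_general (p : LaurentPolynomial ℤ) :
    (mindeg p < ((-8 : ℤ) : WithTop ℤ) →
      Phi p ≠ 0 ∧ mindeg (Phi p) = mindeg p + ((-4 : ℤ) : WithTop ℤ)) ∧
    (((-8 : ℤ) : WithTop ℤ) < mindeg p →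
      Phi p ≠ 0 ∧ mindeg (Phi p) = ((-12 : ℤ) : WithTop ℤ)) := by
  have hshift : mindeg (T (-4) * p) = mindeg p + ((-4 : ℤ) : WithTop ℤ) := mindeg_T_mul _ p
  constructor
  · intro hlow
    have hlt : mindeg (T (-4) * p) < mindeg ((T (-3) - T (-1)) * Q3) := by
      rw [hshift, mindeg_T_sub_T_mul_Q3]
      exact (WithTop.add_lt_add_right WithTop.coe_ne_top hlow).trans_eq (by norm_cast)
    have hPhi : mindeg (Phi p) = mindeg p + ((-4 : ℤ) : WithTop ℤ) := by
      rw [Phi, mindeg_add_of_lt hlt, hshift]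
    exact ⟨mindeg_eq_top_iff.not.mp (hPhi ▸ hshift ▸ hlt.ne_top), hPhi⟩
  · intro hhigh
    have hlt : mindeg ((T (-3) - T (-1)) * Q3) < mindeg (T (-4) * p) := by
      rw [hshift, mindeg_T_sub_T_mul_Q3]
      exact (WithTop.add_lt_add_right WithTop.coe_ne_top hhigh).trans_eq' (by norm_cast)
    have hPhi : mindeg (Phi p) = ((-12 : ℤ) : WithTop ℤ) := by
      rw [Phi, add_comm, mindeg_add_of_lt hlt, mindeg_T_sub_T_mul_Q3]
    exact ⟨mindeg_eq_top_iff.not.mp (hPhi ▸ WithTop.coe_ne_top), hPhi⟩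

/-- Lowest-degree analysis of the skein operator `Φ`. -/
theorem mindeg_Phi (p : LaurentPolynomial ℤ) (hp : p ≠ 0) :
    (mindeg p < ((-8 : ℤ) : WithTop ℤ) →
      Phi p ≠ 0 ∧ mindeg (Phi p) = mindeg p + ((-4 : ℤ) : WithTop ℤ)) ∧
    (((-8 : ℤ) : WithTop ℤ) < mindeg p →
      Phi p ≠ 0 ∧ mindeg (Phi p) = ((-12 : ℤ) : WithTop ℤ)) :=
  mindeg_Phi_general p
end
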